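/- Let K be a field and f, g ∈ K((t)). Let π : K((t)) → K((t)) be the K-linear projection onto K[[t]] that replaces all coefficients in negative degrees by 0, and for h ∈ K((t)) let m_h denote the multiplication operator by h. Set u := π ∘ m_f ∘ m_g − m_g ∘ π ∘ m_f. Then there exist integers a ≤ b such that u vanishes on t^b K[[t]] and the image of u is contained in t^a K[[t]]; moreover, for any such a and b, u induces an endomorphism of the finite-dimensional K-vector space t^a K[[t]] / t^b K[[t]], and the trace of this induced endomorphism equals Res(f·g′). -/

import Mathlib

/-- The formal derivative of a Laurent series: the coefficient of `t^n` in `f'` is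
`(n+1)` times the coefficient of `t^(n+1)` in `f`. -/
noncomputable def lder {K : Type*} [Field K] (f : LaurentSeries K) : LaurentSeries K where
  coeff n := (n + 1 : ℤ) • f.coeff (n + 1)
  isPWO_support' := by
    have hmono : Monotone (fun m : ℤ => m - 1) := fun a b hab => by simpa using hab
    have h : (Function.support fun n : ℤ => (n + 1 : ℤ) • f.coeff (n + 1)) ⊆
        (fun m : ℤ => m - 1) '' (Function.support f.coeff) := by
      intro n hn
      refine ⟨n + 1, fun h0 => ?_, by ring⟩
      simp [Function.mem_support, h0] at hn
    exact (f.isPWO_support'.image_of_monotoneOn (hmono.monotoneOn _)).mono h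

/-- Truncation of a Laurent series to nonnegative degrees. -/
noncomputable def trunc {K : Type*} [Field K] (f : LaurentSeries K) : LaurentSeries K where
  coeff m := if 0 ≤ m then f.coeff m else 0
  isPWO_support' := f.isPWO_support'.mono (fun m hm => by
    simp only [Function.mem_support] at hm ⊢
    intro h0
    apply hm
    split_ifs <;> simp [h0])

@[simp] lemma trunc_coeff {K : Type*} [Field K] (f : LaurentSeries K) (m : ℤ) :
    (trunc f).coeff m = if 0 ≤ m then f.coeff m else 0 := rfl

/-- The projection of `K((t))` onto `K[[t]]` replacing all coefficients in negative
degrees by `0`, as a `K`-linear map. -/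
noncomputable def piPlus (K : Type*) [Field K] :
    LaurentSeries K →ₗ[K] LaurentSeries K where
  toFun := trunc
  map_add' f g := by
    apply HahnSeries.ext
    funext m
    simp only [trunc_coeff, HahnSeries.coeff_add]
    split_ifs <;> simp
  map_smul' c f := by
    apply HahnSeries.ext
    funext m
    simp only [trunc_coeff, HahnSeries.coeff_smul, RingHom.id_apply]
    split_ifs <;> simp

/-- Multiplication by a fixed Laurent series, as a `K`-linear operator on `K((t))`. -/
noncomputable def mull {K : Type*} [Field K] (f : LaurentSeries K) :
    LaurentSeries K →ₗ[K] LaurentSeries K where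
  toFun h := f * h
  map_add' a b := mul_add f a b
  map_smul' c a := by
    simp only [RingHom.id_apply, ← HahnSeries.C_mul_eq_smul]
    ring

/-- The lattice `t^a K[[t]] ⊆ K((t))`, as a `K`-subspace. -/
def latticeAbove (K : Type*) [Field K] (a : ℤ) : Submodule K (LaurentSeries K) where
  carrier := {h : LaurentSeries K | ∀ m : ℤ, m < a → h.coeff m = 0}
  add_mem' := by
    intro x y hx hy m hm
    simp [HahnSeries.coeff_add, hx m hm, hy m hm]
  zero_mem' := by intro m hm; simp
  smul_mem' := by
    intro c x hx m hm
    simp [HahnSeries.coeff_smul, hx m hm]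


/-- The standard quotient-by-submodule construction, registered for subspaces of
`K((t))` (instance search struggles to find it unaided here). -/
noncomputable instance latticeQuotient {L : Type*} [Field L]
    (W : Submodule L (LaurentSeries L)) :
    HasQuotient (↥W) (Submodule L ↥W) := Submodule.hasQuotient

/-!
Compute the trace in the basis `t^m`, `a ≤ m < b`. With `c i = g_i f_{-i}`, the diagonal entry of
`u` at `t^m` is `∑ i, c i * ([0 ≤ m] - [i ≤ m])`: the first indicator comes from `π (f g t^m)`,
the second from `g π (f t^m)`. Diagonal entries outside `[a, b)` vanish, so the sum over `m` may
be taken over any larger window; once the window contains `0` and every `i` with `c i ≠ 0`, each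
`c i` is counted exactly `i` times, and `∑ i, i * c i` is the coefficient of `t⁻¹` in `f g'`.
-/

open Finset

lemma sum_Ico_ite_le {M : Type*} [AddCommGroup M] {A B i : ℤ} (hA : A ≤ i) (hB : i ≤ B)
    (c : M) : ∑ m ∈ Ico A B, (if i ≤ m then c else 0) = (B - i) • c := by
  rw [← sum_filter, show {m ∈ Ico A B | i ≤ m} = Ico i B by
      ext; simp only [mem_filter, mem_Ico]; omega,
    sum_const, Int.card_Ico, ← natCast_zsmul, Int.toNat_of_nonneg (by omega)]

section Subquotient

variable {R V : Type*} [CommRing R] [AddCommGroup V] [Module R V]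

def LinearMap.subquotientEnd (u : V →ₗ[R] V) (W N : Submodule R V) (hW : ∀ v, u v ∈ W)
    (hN : ∀ v ∈ N, u v = 0) : (W ⧸ N.comap W.subtype) →ₗ[R] (W ⧸ N.comap W.subtype) :=
  Submodule.mapQ _ _ ((u ∘ₗ W.subtype).codRestrict W fun v => hW v) fun v hv =>
    show u v ∈ N from (hN v hv).symm ▸ N.zero_mem

lemma LinearMap.subquotientEnd_mk (u : V →ₗ[R] V) (W N : Submodule R V) (hW : ∀ v, u v ∈ W)
    (hN : ∀ v ∈ N, u v = 0) (w : W) :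
    u.subquotientEnd W N hW hN (Submodule.Quotient.mk w) = Submodule.Quotient.mk ⟨u w, hW w⟩ :=
  rfl

end Subquotient

lemma LinearMap.trace_eq_sum_of_equivFun {R M ι : Type*} [CommRing R] [AddCommGroup M]
    [Module R M] [Fintype ι] [DecidableEq ι] (φ : M ≃ₗ[R] ι → R) (e : M →ₗ[R] M) :
    trace R M e = ∑ i, φ (e (φ.symm (Pi.single i 1))) i := by
  rw [trace_eq_matrix_trace R (Module.Basis.ofEquivFun φ), Matrix.trace]
  simp [LinearMap.toMatrix_apply]

section TateOperator

variable {K : Type*} [Field K]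

@[simp] lemma lder_coeff (g : LaurentSeries K) (n : ℤ) :
    (lder g).coeff n = (n + 1 : ℤ) • g.coeff (n + 1) := rfl

lemma coeff_mul_eq_sum {x y : LaurentSeries K} {n : ℤ} (S : Finset ℤ)
    (hS : ∀ i, x.coeff i ≠ 0 → y.coeff (n - i) ≠ 0 → i ∈ S) :
    (x * y).coeff n = ∑ i ∈ S, x.coeff i * y.coeff (n - i) := by
  rw [HahnSeries.coeff_mul]
  refine sum_bij_ne_zero (fun p _ _ => p.1) ?_ ?_ ?_ ?_
  · intro p hp hne
    obtain ⟨-, -, rfl⟩ := mem_antidiagonal.1 hp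
    exact hS _ (left_ne_zero_of_mul hne) (by simpa using right_ne_zero_of_mul hne)
  · intro p hp _ q hq _ h
    obtain ⟨-, -, hp⟩ := mem_antidiagonal.1 hp
    obtain ⟨-, -, hq⟩ := mem_antidiagonal.1 hq
    exact Prod.ext h (by omega)
  · intro i _ hne
    exact ⟨(i, n - i), mem_antidiagonal.2 ⟨left_ne_zero_of_mul hne,
      right_ne_zero_of_mul hne, by ring⟩, hne, rfl⟩
  · intro p hp _
    obtain ⟨-, -, rfl⟩ := mem_antidiagonal.1 hp
    simp

lemma coeff_mul_single_one (x : LaurentSeries K) (m k : ℤ) :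
    (x * HahnSeries.single m 1).coeff k = x.coeff (k - m) := by
  conv_lhs => rw [← sub_add_cancel k m]
  rw [HahnSeries.coeff_mul_single_add, mul_one]

lemma latticeAbove_antitone : Antitone (latticeAbove K) :=
  fun _ _ hab _ hx m hm => hx m (hm.trans_le hab)

lemma mem_latticeAbove_order (x : LaurentSeries K) : x ∈ latticeAbove K x.order :=
  fun _ => HahnSeries.coeff_eq_zero_of_lt_order

lemma single_mem_latticeAbove (m : ℤ) (r : K) : HahnSeries.single m r ∈ latticeAbove K m :=
  fun _ hk => HahnSeries.coeff_single_of_ne hk.ne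

lemma mul_mem_latticeAbove {x y : LaurentSeries K} {a b : ℤ} (hx : x ∈ latticeAbove K a)
    (hy : y ∈ latticeAbove K b) : x * y ∈ latticeAbove K (a + b) := by
  intro m hm
  rw [HahnSeries.coeff_mul]
  refine sum_eq_zero fun p hp => ?_
  obtain ⟨-, -, rfl⟩ := mem_antidiagonal.1 hp
  rcases lt_or_ge p.1 a with h | h
  · rw [hx _ h, zero_mul]
  · rw [hy _ (by omega), mul_zero]

lemma trunc_mem_latticeAbove_zero (x : LaurentSeries K) : trunc x ∈ latticeAbove K 0 :=
  fun _ hm => if_neg hm.not_ge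

lemma trunc_eq_self {x : LaurentSeries K} (hx : x ∈ latticeAbove K 0) : trunc x = x := by
  ext m
  rw [trunc_coeff, ite_eq_left_iff]
  exact fun hm => (hx m (not_le.1 hm)).symm

noncomputable def tateOperator (f g : LaurentSeries K) : LaurentSeries K →ₗ[K] LaurentSeries K :=
  piPlus K ∘ₗ mull f ∘ₗ mull g - mull g ∘ₗ piPlus K ∘ₗ mull f

lemma tateOperator_apply (f g h : LaurentSeries K) :
    tateOperator f g h = trunc (f * (g * h)) - g * trunc (f * h) := rfl

lemma tateOperator_eq_zero {f g h : LaurentSeries K} {b : ℤ} (hf : -f.order ≤ b)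
    (hfg : -(f.order + g.order) ≤ b) (hh : h ∈ latticeAbove K b) : tateOperator f g h = 0 := by
  have hfh : f * h ∈ latticeAbove K 0 :=
    latticeAbove_antitone (by omega) (mul_mem_latticeAbove (mem_latticeAbove_order f) hh)
  have hfgh : f * (g * h) ∈ latticeAbove K 0 :=
    latticeAbove_antitone (by omega) (mul_mem_latticeAbove (mem_latticeAbove_order f)
      (mul_mem_latticeAbove (mem_latticeAbove_order g) hh))
  rw [tateOperator_apply, trunc_eq_self hfh, trunc_eq_self hfgh, mul_left_comm, sub_self]

lemma tateOperator_mem_latticeAbove {f g : LaurentSeries K} {a : ℤ} (ha : a ≤ 0)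
    (hag : a ≤ g.order) (h : LaurentSeries K) : tateOperator f g h ∈ latticeAbove K a :=
  sub_mem (latticeAbove_antitone ha (trunc_mem_latticeAbove_zero _))
    (latticeAbove_antitone (by simpa using hag)
      (mul_mem_latticeAbove (mem_latticeAbove_order g) (trunc_mem_latticeAbove_zero _)))

lemma exists_tateOperator_latticeAbove_bounds (f g : LaurentSeries K) :
    ∃ a b : ℤ, a ≤ b ∧ (∀ h ∈ latticeAbove K b, tateOperator f g h = 0) ∧
      ∀ h, tateOperator f g h ∈ latticeAbove K a :=
  ⟨min g.order 0, max (max (-f.order) (-(f.order + g.order))) 0, by omega,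
    fun _ hh => tateOperator_eq_zero (by omega) (by omega) hh,
    tateOperator_mem_latticeAbove (by omega) (by omega)⟩

lemma mem_Icc_order_of_coeff_ne_zero {f g : LaurentSeries K} {i : ℤ} (hg : g.coeff i ≠ 0)
    (hf : f.coeff (-i) ≠ 0) : i ∈ Icc g.order (-f.order) := by
  have := HahnSeries.order_le_of_coeff_ne_zero hg
  have := HahnSeries.order_le_of_coeff_ne_zero hf
  rw [mem_Icc]
  omega

lemma tateOperator_single_coeff_self (f g : LaurentSeries K) (m : ℤ) :
    (tateOperator f g (HahnSeries.single m 1)).coeff m =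
      ∑ i ∈ Icc g.order (-f.order), ((if 0 ≤ m then g.coeff i * f.coeff (-i) else 0) -
        if i ≤ m then g.coeff i * f.coeff (-i) else 0) := by
  have hfirst : (trunc (f * (g * HahnSeries.single m 1))).coeff m =
      if 0 ≤ m then ∑ i ∈ Icc g.order (-f.order), g.coeff i * f.coeff (-i) else 0 := by
    rw [trunc_coeff, ← mul_assoc, mul_comm f, coeff_mul_single_one, sub_self,
      coeff_mul_eq_sum _ fun i hg hf => mem_Icc_order_of_coeff_ne_zero hg (by simpa using hf)]
    simp
  have hsecond : (g * trunc (f * HahnSeries.single m 1)).coeff m =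
      ∑ i ∈ Icc g.order (-f.order), if i ≤ m then g.coeff i * f.coeff (-i) else 0 := by
    rw [coeff_mul_eq_sum (Icc g.order (-f.order)) fun i hg hf => ?_]
    · refine sum_congr rfl fun i _ => ?_
      rw [trunc_coeff, coeff_mul_single_one, sub_sub_cancel_left]
      split_ifs <;> first | rfl | exact mul_zero _ | omega
    · refine mem_Icc_order_of_coeff_ne_zero hg fun h0 => hf ?_
      rw [trunc_coeff, coeff_mul_single_one, sub_sub_cancel_left, h0, ite_self]
  rw [tateOperator_apply, HahnSeries.coeff_sub, hfirst, hsecond, sum_sub_distrib]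
  split_ifs <;> simp

lemma sum_Ico_tateOperator_single_coeff_self (f g : LaurentSeries K) {A B : ℤ}
    (hA : A ≤ min g.order 0) (hB : max (-f.order) 0 ≤ B) :
    ∑ m ∈ Ico A B, (tateOperator f g (HahnSeries.single m 1)).coeff m =
      ∑ i ∈ Icc g.order (-f.order), i • (g.coeff i * f.coeff (-i)) := by
  simp_rw [tateOperator_single_coeff_self]
  rw [sum_comm]
  refine sum_congr rfl fun i hi => ?_
  rw [mem_Icc] at hi
  rw [sum_sub_distrib, sum_Ico_ite_le (by omega) (by omega),
    sum_Ico_ite_le (by omega) (by omega), ← sub_smul, sub_sub_sub_cancel_left, sub_zero]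

lemma coeff_mul_lder_neg_one (f g : LaurentSeries K) :
    (f * lder g).coeff (-1) = ∑ i ∈ Icc g.order (-f.order), i • (g.coeff i * f.coeff (-i)) := by
  rw [coeff_mul_eq_sum ((Icc g.order (-f.order)).map (Equiv.neg ℤ).toEmbedding) ?_, sum_map]
  · refine sum_congr rfl fun i _ => ?_
    simp only [Function.Embedding.coeFn_mk, Equiv.neg_apply, Int.reduceNeg, sub_neg_eq_add,
      lder_coeff, neg_add_cancel_comm, zsmul_eq_mul]
    ring
  · intro j hf hg
    rw [mem_map_equiv, Equiv.neg_symm, Equiv.neg_apply]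
    refine mem_Icc_order_of_coeff_ne_zero (fun h0 => hg ?_) (by rwa [neg_neg])
    rw [lder_coeff, show -1 - j + 1 = -j by ring, h0, smul_zero]

lemma sum_Ico_tateOperator_single_coeff_self_eq_residue {f g : LaurentSeries K} {a b : ℤ}
    (hb : ∀ h ∈ latticeAbove K b, tateOperator f g h = 0)
    (ha : ∀ h, tateOperator f g h ∈ latticeAbove K a) :
    ∑ m ∈ Ico a b, (tateOperator f g (HahnSeries.single m 1)).coeff m =
      (f * lder g).coeff (-1) := by
  calc _ = ∑ m ∈ Ico (min a (min g.order 0)) (max b (max (-f.order) 0)),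
        (tateOperator f g (HahnSeries.single m 1)).coeff m := by
        refine sum_subset (Ico_subset_Ico (by omega) (by omega)) fun m _ hm => ?_
        rw [mem_Ico, not_and_or, not_le, not_lt] at hm
        rcases hm with hm | hm
        · exact ha _ m hm
        · rw [hb _ (latticeAbove_antitone hm (single_mem_latticeAbove m 1)),
            HahnSeries.coeff_zero]
    _ = _ := by
        rw [sum_Ico_tateOperator_single_coeff_self f g (by omega) (by omega),
          coeff_mul_lder_neg_one]

variable (a b : ℤ)

noncomputable def latticeCoeffs : latticeAbove K a →ₗ[K] (Ico a b → K) where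
  toFun x m := (x : LaurentSeries K).coeff m
  map_add' _ _ := rfl
  map_smul' _ _ := rfl

lemma latticeCoeffs_single (m : Ico a b) :
    latticeCoeffs a b ⟨HahnSeries.single (m : ℤ) (1 : K),
      latticeAbove_antitone (mem_Ico.1 m.2).1 (single_mem_latticeAbove _ _)⟩ = Pi.single m 1 := by
  ext k
  change (HahnSeries.single (m : ℤ) 1).coeff k = (Pi.single m 1 : Ico a b → K) k
  rcases eq_or_ne k m with rfl | hkm
  · simp
  · rw [Pi.single_eq_of_ne hkm, HahnSeries.coeff_single_of_ne (Subtype.coe_injective.ne hkm)]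

lemma latticeCoeffs_surjective : Function.Surjective (latticeCoeffs (K := K) a b) := by
  intro v
  refine ⟨∑ m, v m • ⟨HahnSeries.single (m : ℤ) 1,
    latticeAbove_antitone (mem_Ico.1 m.2).1 (single_mem_latticeAbove _ _)⟩, ?_⟩
  simp only [map_sum, map_smul, latticeCoeffs_single]
  ext k
  simp [Pi.single_apply]

lemma ker_latticeCoeffs :
    LinearMap.ker (latticeCoeffs (K := K) a b) =
      (latticeAbove K b).comap (latticeAbove K a).subtype := by
  ext x
  simp only [LinearMap.mem_ker, Submodule.mem_comap, Submodule.subtype_apply, funext_iff]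
  refine ⟨fun hx m hm => ?_, fun hx m => hx m (mem_Ico.1 m.2).2⟩
  rcases lt_or_ge m a with hma | hma
  · exact x.2 m hma
  · exact hx ⟨m, mem_Ico.2 ⟨hma, hm⟩⟩

noncomputable def latticeQuotientEquiv :
    (latticeAbove K a ⧸ (latticeAbove K b).comap (latticeAbove K a).subtype) ≃ₗ[K]
      (Ico a b → K) :=
  (Submodule.quotEquivOfEq _ _ (ker_latticeCoeffs a b).symm).trans
    ((latticeCoeffs a b).quotKerEquivOfSurjective (latticeCoeffs_surjective a b))

lemma latticeQuotientEquiv_mk (x : latticeAbove K a) :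
    latticeQuotientEquiv a b (Submodule.Quotient.mk x) = latticeCoeffs a b x := rfl

lemma trace_subquotientEnd_latticeAbove (u : LaurentSeries K →ₗ[K] LaurentSeries K)
    (ha : ∀ h, u h ∈ latticeAbove K a) (hb : ∀ h ∈ latticeAbove K b, u h = 0) :
    LinearMap.trace K (latticeAbove K a ⧸ (latticeAbove K b).comap (latticeAbove K a).subtype)
      (u.subquotientEnd (latticeAbove K a) (latticeAbove K b) ha hb) =
      ∑ m ∈ Ico a b, (u (HahnSeries.single m 1)).coeff m := by
  classical
  rw [LinearMap.trace_eq_sum_of_equivFun (latticeQuotientEquiv a b),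
    ← sum_coe_sort (Ico a b) fun m => (u (HahnSeries.single m 1)).coeff m]
  refine sum_congr rfl fun m _ => ?_
  rw [(LinearEquiv.symm_apply_eq _).2
      ((latticeQuotientEquiv_mk a b _).trans (latticeCoeffs_single a b m)).symm,
    LinearMap.subquotientEnd_mk, latticeQuotientEquiv_mk]
  rfl

end TateOperator

/-- **Tate's residue formula.**  For `f, g ∈ K((t))` and `π` the projection onto
`K[[t]]`, the operator `u = π∘m_f∘m_g − m_g∘π∘m_f` kills `t^b K[[t]]` and has image
contained in `t^a K[[t]]` for suitable integers `a ≤ b`; and for any such `a ≤ b` the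
trace of the endomorphism induced by `u` on the finite-dimensional `K`-vector space
`t^a K[[t]] / t^b K[[t]]` equals `Res(f·g')`. -/
theorem tate_trace_formula (K : Type*) [Field K] (f g : LaurentSeries K)
    (u : LaurentSeries K →ₗ[K] LaurentSeries K)
    (hu : u = piPlus K ∘ₗ mull f ∘ₗ mull g - mull g ∘ₗ piPlus K ∘ₗ mull f) :
    (∃ a b : ℤ, a ≤ b ∧ (∀ h ∈ latticeAbove K b, u h = 0) ∧
      (∀ h : LaurentSeries K, u h ∈ latticeAbove K a)) ∧
    (∀ a b : ℤ, a ≤ b → (∀ h ∈ latticeAbove K b, u h = 0) →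
      ∀ ha : (∀ h : LaurentSeries K, u h ∈ latticeAbove K a),
        FiniteDimensional K
          (↥(latticeAbove K a) ⧸ (latticeAbove K b).comap (latticeAbove K a).subtype) ∧
        ∃ e : (↥(latticeAbove K a) ⧸
              (latticeAbove K b).comap (latticeAbove K a).subtype) →ₗ[K]
            (↥(latticeAbove K a) ⧸
              (latticeAbove K b).comap (latticeAbove K a).subtype),
          (∀ h : ↥(latticeAbove K a),
            e (Submodule.Quotient.mk h) = Submodule.Quotient.mk ⟨u ↑h, ha ↑h⟩) ∧
          LinearMap.trace K
            (↥(latticeAbove K a) ⧸ (latticeAbove K b).comap (latticeAbove K a).subtype)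
            e = (f * lder g).coeff (-1)) := by
  obtain rfl : u = tateOperator f g := hu
  refine ⟨exists_tateOperator_latticeAbove_bounds f g, fun a b _ hb ha => ?_⟩
  refine ⟨(latticeQuotientEquiv a b).symm.finiteDimensional,
    (tateOperator f g).subquotientEnd _ _ ha hb, fun _ => rfl, ?_⟩
  rw [trace_subquotientEnd_latticeAbove, sum_Ico_tateOperator_single_coeff_self_eq_residue hb ha]
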